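/- arXiv:2310.01257 — 7 statements merged into one kernel-verified Lean document; each statement's English description precedes it below -/
import Mathlib

section
/- The total number of quads in the EvenQuads-2^n deck (for n ≥ 2) equals C(2^n, 3) / 4, i.e., the number of 4-element subsets {a,b,c,d} of Z_2^n with a + b + c + d = 0 is (1/4) · binomial(2^n, 3). -/
open Finset

private lemma eq_of_add_eq_zero'' {n : ℕ} {a b : Fin n → ZMod 2} (h : a + b = 0) : a = b := by
  have hb : b + b = 0 := by
    funext i
    exact CharTwo.add_self_eq_zero (b i)
  have := congrArg (· + b) h
  simpa [add_assoc, hb] using this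

private lemma sum_notmem {n : ℕ} (t : Finset (Fin n → ZMod 2)) (ht : t.card = 3) :
    (∑ x ∈ t, x) ∉ t := by
  obtain ⟨a, b, c, hab, hac, hbc, rfl⟩ := Finset.card_eq_three.mp ht
  have hsum : ∑ x ∈ ({a, b, c} : Finset (Fin n → ZMod 2)), x = a + (b + c) := by
    rw [Finset.sum_insert (by simp [hab, hac]), Finset.sum_insert (by simp [hbc]),
      Finset.sum_singleton]
  rw [hsum]
  intro hmem
  rcases Finset.mem_insert.mp hmem with h | hmem
  · have h' : a + (b + c) = a + 0 := by rw [add_zero]; exact h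
    exact hbc (eq_of_add_eq_zero'' (add_left_cancel h'))
  rcases Finset.mem_insert.mp hmem with h | hmem
  · have h' : b + (a + c) = b + 0 := by rw [add_zero]; linear_combination h
    exact hac (eq_of_add_eq_zero'' (add_left_cancel h'))
  · have h := Finset.mem_singleton.mp hmem
    have h' : c + (a + b) = c + 0 := by rw [add_zero]; linear_combination h
    exact hab (eq_of_add_eq_zero'' (add_left_cancel h'))

/-- The number of quads in the EvenQuads-2^n deck is C(2^n,3)/4. -/
theorem evenquads_number_of_quads (n : ℕ) (hn : 2 ≤ n) :
    ((Finset.univ : Finset (Fin n → ZMod 2)).powersetCard 4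
      |>.filter (fun s => ∑ x ∈ s, x = 0)).card = (2 ^ n).choose 3 / 4 := by
  set Q := ((Finset.univ : Finset (Fin n → ZMod 2)).powersetCard 4
      |>.filter (fun s => ∑ x ∈ s, x = 0)) with hQ
  have hmaps : ∀ t ∈ (Finset.univ : Finset (Fin n → ZMod 2)).powersetCard 3,
      insert (∑ x ∈ t, x) t ∈ Q := by
    intro t ht
    rw [Finset.mem_powersetCard] at ht
    obtain ⟨-, ht3⟩ := ht
    have hnm := sum_notmem t ht3
    rw [hQ, Finset.mem_filter, Finset.mem_powersetCard]
    refine ⟨⟨Finset.subset_univ _, ?_⟩, ?_⟩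
    · rw [Finset.card_insert_of_notMem hnm, ht3]
    · rw [Finset.sum_insert hnm]
      funext i
      exact CharTwo.add_self_eq_zero _
  have key : ((Finset.univ : Finset (Fin n → ZMod 2)).powersetCard 3).card = Q.card * 4 := by
    rw [Finset.card_eq_sum_card_fiberwise hmaps]
    have hfib : ∀ q ∈ Q,
        (((Finset.univ : Finset (Fin n → ZMod 2)).powersetCard 3).filter
          (fun t => insert (∑ x ∈ t, x) t = q)).card = 4 := by
      intro q hq
      rw [hQ, Finset.mem_filter, Finset.mem_powersetCard] at hq
      obtain ⟨⟨-, hq4⟩, hq0⟩ := hq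
      have : (((Finset.univ : Finset (Fin n → ZMod 2)).powersetCard 3).filter
          (fun t => insert (∑ x ∈ t, x) t = q)) = q.powersetCard 3 := by
        ext t
        rw [Finset.mem_filter, Finset.mem_powersetCard, Finset.mem_powersetCard]
        constructor
        · rintro ⟨⟨-, ht3⟩, heq⟩
          exact ⟨heq ▸ Finset.subset_insert _ _, ht3⟩
        · rintro ⟨hsub, ht3⟩
          refine ⟨⟨Finset.subset_univ _, ht3⟩, ?_⟩
          have hss : t ⊂ q := Finset.ssubset_iff_subset_ne.mpr ⟨hsub, by
            intro h; rw [h, hq4] at ht3; omega⟩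
          obtain ⟨d, hdq, hdt⟩ := Finset.exists_of_ssubset hss
          have hins : insert d t = q := by
            apply Finset.eq_of_subset_of_card_le
            · exact Finset.insert_subset hdq hsub
            · rw [Finset.card_insert_of_notMem hdt, ht3, hq4]
          have hd : d + ∑ x ∈ t, x = 0 := by
            have h0 : ∑ x ∈ insert d t, x = 0 := by rw [hins]; exact hq0
            rwa [Finset.sum_insert hdt] at h0
          have : (∑ x ∈ t, x) = d := (eq_of_add_eq_zero'' hd).symm
          rw [this, hins]
      rw [this, Finset.card_powersetCard, hq4]
      rfl
    rw [Finset.sum_congr rfl hfib, Finset.sum_const, smul_eq_mul]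
  have hcard : ((Finset.univ : Finset (Fin n → ZMod 2)).powersetCard 3).card
      = (2 ^ n).choose 3 := by
    rw [Finset.card_powersetCard, Finset.card_univ]
    congr 1
    rw [Fintype.card_fun]
    simp
  rw [hcard] at key
  omega
end

section
/- A quad code C ⊆ Z_2^ℓ of dimension k (every codeword of even weight, minimum nonzero weight at least 4) is realizable by a sequence of ℓ pairwise distinct cards in Z_2^n if and only if n ≥ ℓ - k - 1. -/
/-!
Let `E` be the even-weight subspace, of dimension `ℓ - 1`, and `ψ_a c = ∑ cᵢ aᵢ`: the cards `a`
realize `C` exactly when `C = E ⊓ ker ψ_a`. Rank–nullity for `ψ_a` restricted to `E` gives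
`dim E - k ≤ n`. Conversely, if `dim E - k ≤ n` then `E ⧸ C` embeds in `Z₂ⁿ`, and extending
`E → E ⧸ C → Z₂ⁿ` to all of `Z₂^ℓ` gives `ψ` with `E ⊓ ker ψ = C`. Its values on the unit vectors
are the cards; they are distinct since otherwise `eᵢ + eⱼ` would be a codeword of weight 2.
-/

open Module

section FiniteDimensional

variable {K V M : Type*} [DivisionRing K] [AddCommGroup V] [Module K V] [AddCommGroup M]
  [Module K M] [FiniteDimensional K V] [FiniteDimensional K M]

theorem Submodule.finrank_le_finrank_inf_ker_add (W : Submodule K V) (ψ : V →ₗ[K] M) :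
    finrank K W ≤ finrank K ↥(W ⊓ LinearMap.ker ψ) + finrank K M := by
  have hker : (LinearMap.ker (ψ ∘ₗ W.subtype)).map W.subtype = W ⊓ LinearMap.ker ψ := by
    rw [LinearMap.ker_comp, Submodule.map_comap_subtype]
  have hrank := (ψ ∘ₗ W.subtype).finrank_range_add_finrank_ker
  have hrange := Submodule.finrank_le (LinearMap.range (ψ ∘ₗ W.subtype))
  rw [← hker, Submodule.finrank_map_subtype_eq]
  omega

theorem Submodule.exists_linearMap_inf_ker_eq {C W : Submodule K V} (hCW : C ≤ W)
    (hdim : finrank K W ≤ finrank K C + finrank K M) :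
    ∃ ψ : V →ₗ[K] M, W ⊓ LinearMap.ker ψ = C := by
  set C' := C.comap W.subtype
  have hC' : finrank K C' = finrank K C := (Submodule.comapSubtypeEquivOfLe hCW).finrank_eq
  obtain ⟨j, hj⟩ : ∃ j : (W ⧸ C') →ₗ[K] M, Function.Injective j := by
    refine finrank_le_iff_exists_linearMap.mp ?_
    have hquot := C'.finrank_quotient_add_finrank
    omega
  obtain ⟨ψ, hψ⟩ := LinearMap.exists_extend (j ∘ₗ C'.mkQ)
  refine ⟨ψ, ?_⟩
  rw [← Submodule.map_comap_subtype, ← LinearMap.ker_comp, hψ,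
    LinearMap.ker_comp_of_ker_eq_bot _ (LinearMap.ker_eq_bot.mpr hj), Submodule.ker_mkQ,
    Submodule.map_comap_subtype, inf_eq_right.mpr hCW]

end FiniteDimensional

theorem natCast_hammingNorm_eq_sum {ι : Type*} [Fintype ι] (c : ι → ZMod 2) :
    (hammingNorm c : ZMod 2) = ∑ i, c i := by
  classical
  rw [hammingNorm, ← Finset.sum_filter_ne_zero, Finset.card_eq_sum_ones, Nat.cast_sum]
  refine Finset.sum_congr rfl fun i hi => ?_
  rw [Nat.cast_one]
  exact (Fin.eq_one_of_ne_zero _ (Finset.mem_filter.mp hi).2).symm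

section EvenWeight

variable {ι : Type*} [Fintype ι]

variable (ι) in
def evenWeight : Submodule (ZMod 2) (ι → ZMod 2) :=
  LinearMap.ker (Fintype.linearCombination (ZMod 2) fun _ : ι => (1 : ZMod 2))

theorem mem_evenWeight {c : ι → ZMod 2} : c ∈ evenWeight ι ↔ Even (hammingNorm c) := by
  simp [evenWeight, Fintype.linearCombination_apply, ← natCast_hammingNorm_eq_sum,
    ZMod.natCast_eq_zero_iff_even]

theorem finrank_evenWeight : finrank (ZMod 2) (evenWeight ι) = Fintype.card ι - 1 := by
  classical
  rcases isEmpty_or_nonempty ι with hι | ⟨⟨i⟩⟩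
  · simp [Submodule.eq_bot_of_subsingleton (p := evenWeight ι)]
  rw [evenWeight]
  set parity := Fintype.linearCombination (ZMod 2) fun _ : ι => (1 : ZMod 2)
  have hsurj : LinearMap.range parity = ⊤ :=
    LinearMap.range_eq_top.mpr fun x => ⟨Pi.single i x, by simp [parity]⟩
  have := parity.finrank_range_add_finrank_ker
  rw [hsurj, finrank_top, finrank_self, finrank_pi] at this
  omega

theorem hammingNorm_single_sub_single_le_two [DecidableEq ι] {β : Type*} [AddGroup β]
    [DecidableEq β] (i j : ι) (a b : β) :
    hammingNorm (Pi.single i a - Pi.single j b : ι → β) ≤ 2 := by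
  refine (Finset.card_le_card fun k hk => ?_).trans (Finset.card_le_two (a := i) (b := j))
  by_contra hk'
  simp_all [Pi.single_apply]

theorem injective_apply_single_of_inf_ker_le [DecidableEq ι] {M : Type*} [AddCommGroup M]
    [Module (ZMod 2) M] (ψ : (ι → ZMod 2) →ₗ[ZMod 2] M) {C : Submodule (ZMod 2) (ι → ZMod 2)}
    (hC : evenWeight ι ⊓ LinearMap.ker ψ ≤ C) (hmin : ∀ c ∈ C, c ≠ 0 → 2 < hammingNorm c) :
    Function.Injective fun i => ψ (Pi.single i 1) := by
  intro i j hij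
  by_contra hne
  set e : ι → ι → ZMod 2 := fun i => Pi.single i 1
  have hcC : e i - e j ∈ C :=
    hC ⟨by simp [evenWeight, e, Fintype.linearCombination_apply], by simpa [sub_eq_zero] using hij⟩
  have hc0 : e i - e j ≠ 0 := fun h => by simpa [e, hne] using congrFun h i
  exact (hmin _ hcC hc0).not_ge (hammingNorm_single_sub_single_le_two i j 1 1)

theorem realizes_iff_eq_inf_ker {M : Type*} [AddCommGroup M] [Module (ZMod 2) M]
    (C : Submodule (ZMod 2) (ι → ZMod 2)) (a : ι → M) :
    (∀ c, c ∈ C ↔ (Even (hammingNorm c) ∧ ∑ i, c i • a i = 0)) ↔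
      C = evenWeight ι ⊓ LinearMap.ker (Fintype.linearCombination (ZMod 2) a) := by
  simp [SetLike.ext_iff, mem_evenWeight, Fintype.linearCombination_apply]

end EvenWeight

theorem quad_code_realizable_iff_general (ℓ n k : ℕ)
    (C : Submodule (ZMod 2) (Fin ℓ → ZMod 2))
    (hk : Module.finrank (ZMod 2) C = k)
    (heven : ∀ c ∈ C, Even (hammingNorm c))
    (hmin : ∀ c ∈ C, c ≠ 0 → 4 ≤ hammingNorm c) :
    (∃ a : Fin ℓ → (Fin n → ZMod 2), Function.Injective a ∧
        ∀ c : Fin ℓ → ZMod 2,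
          c ∈ C ↔ (Even (hammingNorm c) ∧ ∑ i, c i • a i = 0)) ↔
      n ≥ ℓ - k - 1 := by
  have hCE : C ≤ evenWeight (Fin ℓ) := fun c hc => mem_evenWeight.mpr (heven c hc)
  have hE : finrank (ZMod 2) (evenWeight (Fin ℓ)) = ℓ - 1 := by
    simpa using finrank_evenWeight (ι := Fin ℓ)
  simp_rw [realizes_iff_eq_inf_ker]
  constructor
  · rintro ⟨a, -, hC⟩
    have hdim := (evenWeight (Fin ℓ)).finrank_le_finrank_inf_ker_add
      (Fintype.linearCombination (ZMod 2) a)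
    rw [← hC, hk, hE, finrank_fin_fun] at hdim
    omega
  · intro hn
    obtain ⟨ψ, hψ⟩ := Submodule.exists_linearMap_inf_ker_eq (M := Fin n → ZMod 2) hCE
      (by rw [hE, hk, finrank_fin_fun]; omega)
    have hψa : Fintype.linearCombination (ZMod 2) (fun i => ψ (Pi.single i 1)) = ψ := by
      ext; simp
    refine ⟨fun i => ψ (Pi.single i 1), ?_, by rw [hψa, hψ]⟩
    exact injective_apply_single_of_inf_ker_le ψ hψ.le fun c hc hc0 =>
      lt_of_lt_of_le (by norm_num) (hmin c hc hc0)

/-- A quad code of length ℓ and dimension k is realizable by distinct cards in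
Z₂ⁿ iff n ≥ ℓ - k - 1. -/
theorem quad_code_realizable_iff (ℓ n k : ℕ) (hℓ : 0 < ℓ)
    (C : Submodule (ZMod 2) (Fin ℓ → ZMod 2))
    (hk : Module.finrank (ZMod 2) C = k)
    (heven : ∀ c ∈ C, Even (hammingNorm c))
    (hmin : ∀ c ∈ C, c ≠ 0 → 4 ≤ hammingNorm c) :
    (∃ a : Fin ℓ → (Fin n → ZMod 2), Function.Injective a ∧
        ∀ c : Fin ℓ → ZMod 2,
          c ∈ C ↔ (Even (hammingNorm c) ∧ ∑ i, c i • a i = 0)) ↔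
      n ≥ ℓ - k - 1 :=
  quad_code_realizable_iff_general ℓ n k C hk heven hmin
end

section
/- If two sequences of pairwise distinct cards (a_1,...,a_ℓ) and (b_1,...,b_ℓ) in Z_2^n realize the same quad code, then there exists an affine transformation f of Z_2^n with f(a_i) = b_i for all i; conversely, applying an affine transformation to a sequence of cards does not change the realized quad code. -/
/-!
Over `ZMod 2` a weight vector has even Hamming weight iff its coordinates sum to zero, so the quad
code of `a` is the space of affine relations of `a`. Fixing a base point `a i₀`, these relations
correspond to the linear relations of the differences `a i - a i₀`, i.e. to the kernel of
`d ↦ ∑ d i • (a i - a i₀)`. Two linear maps with the same kernel into a finite-dimensional space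
differ by an automorphism of the target (extend the induced isomorphism of their ranges), which
yields the linear part of the affine map. Conversely an affine map preserves every affine relation,
since the weights sum to zero and kill the translation.
-/

open Finset LinearMap

theorem ZMod.even_hammingNorm_iff_sum_eq_zero {ι : Type*} [Fintype ι] (c : ι → ZMod 2) :
    Even (hammingNorm c) ↔ ∑ i, c i = 0 := by
  have hsum : ∑ i, c i = (hammingNorm c : ZMod 2) := by
    rw [hammingNorm, ← sum_filter_ne_zero, card_eq_sum_ones, Nat.cast_sum]
    refine sum_congr rfl fun i hi => ?_
    rw [Nat.cast_one]
    exact Fin.eq_one_of_ne_zero _ (mem_filter.1 hi).2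
  rw [hsum, ZMod.natCast_eq_zero_iff, even_iff_two_dvd]

theorem LinearMap.exists_linearEquiv_apply_eq_of_ker_eq {K U V : Type*} [Field K]
    [AddCommGroup U] [Module K U] [AddCommGroup V] [Module K V] [FiniteDimensional K V]
    {φ ψ : U →ₗ[K] V} (h : ker φ = ker ψ) : ∃ M : V ≃ₗ[K] V, ∀ u, M (φ u) = ψ u := by
  let e : range φ ≃ₗ[K] range ψ :=
    φ.quotKerEquivRange.symm ≪≫ₗ Submodule.quotEquivOfEq _ _ h ≪≫ₗ ψ.quotKerEquivRange
  obtain ⟨M, hM⟩ := Submodule.exists_linearEquiv_restrict_eq e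
  refine ⟨M, fun u => ?_⟩
  rw [← hM ⟨φ u, mem_range_self φ u⟩]
  simp [e, quotKerEquivRange_symm_apply_image, Submodule.quotEquivOfEq_mk,
    quotKerEquivRange_apply_mk]

section AffineRelations

variable {R V ι : Type*} [CommRing R] [AddCommGroup V] [Module R V] [Fintype ι]

theorem sum_smul_map_add_of_sum_eq_zero {W F : Type*} [AddCommGroup W] [Module R W]
    [FunLike F V W] [LinearMapClass F R V W] (M : F) (t : W) (a : ι → V) {c : ι → R}
    (hc : ∑ i, c i = 0) :
    ∑ i, c i • (M (a i) + t) = M (∑ i, c i • a i) := by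
  simp only [smul_add, sum_add_distrib, ← sum_smul, hc, zero_smul, add_zero, map_sum, map_smul]

variable [DecidableEq ι]

theorem ker_linearCombination_sub_eq_of_affine_relations_iff {a b : ι → V} (i₀ : ι)
    (h : ∀ c : ι → R, ∑ i, c i = 0 → (∑ i, c i • a i = 0 ↔ ∑ i, c i • b i = 0)) :
    ker (Fintype.linearCombination R fun i => a i - a i₀) =
      ker (Fintype.linearCombination R fun i => b i - b i₀) := by
  ext d
  -- shifting the total weight of `d` onto `i₀` turns `d` into an affine relation
  let c : ι → R := d - Pi.single i₀ (∑ j, d j)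
  have hc : ∑ i, c i = 0 := by simp [c]
  have hcd (x : ι → V) : ∑ i, c i • x i = ∑ i, d i • (x i - x i₀) := by
    simp [c, sub_smul, smul_sub, sum_sub_distrib, ← sum_smul, Pi.single_apply]
  simp only [mem_ker, Fintype.linearCombination_apply, ← hcd]
  exact h c hc

end AffineRelations

theorem exists_linearEquiv_add_eq_of_affine_relations_iff {K V ι : Type*} [Field K]
    [AddCommGroup V] [Module K V] [FiniteDimensional K V] [Fintype ι] {a b : ι → V}
    (h : ∀ c : ι → K, ∑ i, c i = 0 → (∑ i, c i • a i = 0 ↔ ∑ i, c i • b i = 0)) :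
    ∃ (M : V ≃ₗ[K] V) (t : V), ∀ i, M (a i) + t = b i := by
  classical
  cases isEmpty_or_nonempty ι with
  | inl => exact ⟨LinearEquiv.refl K V, 0, isEmptyElim⟩
  | inr hne =>
    obtain ⟨i₀⟩ := hne
    obtain ⟨M, hM⟩ := exists_linearEquiv_apply_eq_of_ker_eq
      (ker_linearCombination_sub_eq_of_affine_relations_iff i₀ h)
    refine ⟨M, b i₀ - M (a i₀), fun i => ?_⟩
    have hi := hM (Pi.single i 1)
    simp only [Fintype.linearCombination_apply_single, one_smul, map_sub] at hi
    rw [← sub_add_cancel (b i) (b i₀), ← hi]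
    abel

theorem same_quad_code_iff_affine_general (n ℓ : ℕ)
    (a b : Fin ℓ → (Fin n → ZMod 2)) :
    ((∀ c : Fin ℓ → ZMod 2,
        (Even (hammingNorm c) ∧ ∑ i, c i • a i = 0) ↔
        (Even (hammingNorm c) ∧ ∑ i, c i • b i = 0)) →
      ∃ (M : (Fin n → ZMod 2) ≃ₗ[ZMod 2] (Fin n → ZMod 2)) (t : Fin n → ZMod 2),
        ∀ i, M (a i) + t = b i) ∧
    (∀ (M : (Fin n → ZMod 2) ≃ₗ[ZMod 2] (Fin n → ZMod 2)) (t : Fin n → ZMod 2),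
      (∀ i, M (a i) + t = b i) →
      ∀ c : Fin ℓ → ZMod 2,
        (Even (hammingNorm c) ∧ ∑ i, c i • a i = 0) ↔
        (Even (hammingNorm c) ∧ ∑ i, c i • b i = 0)) := by
  simp only [ZMod.even_hammingNorm_iff_sum_eq_zero]
  refine ⟨fun hcode => exists_linearEquiv_add_eq_of_affine_relations_iff fun c hc => ?_,
    fun M t hab c => and_congr_right fun hc => ?_⟩
  · simpa [hc] using hcode c
  · rw [← funext hab, sum_smul_map_add_of_sum_eq_zero M t a hc, M.map_eq_zero_iff]

/-- Two sequences of distinct cards realize the same quad code iff they differ by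
an affine transformation. -/
theorem same_quad_code_iff_affine (n ℓ : ℕ)
    (a b : Fin ℓ → (Fin n → ZMod 2))
    (ha : Function.Injective a) (hb : Function.Injective b) :
    ((∀ c : Fin ℓ → ZMod 2,
        (Even (hammingNorm c) ∧ ∑ i, c i • a i = 0) ↔
        (Even (hammingNorm c) ∧ ∑ i, c i • b i = 0)) →
      ∃ (M : (Fin n → ZMod 2) ≃ₗ[ZMod 2] (Fin n → ZMod 2)) (t : Fin n → ZMod 2),
        ∀ i, M (a i) + t = b i) ∧
    (∀ (M : (Fin n → ZMod 2) ≃ₗ[ZMod 2] (Fin n → ZMod 2)) (t : Fin n → ZMod 2),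
      (∀ i, M (a i) + t = b i) →
      ∀ c : Fin ℓ → ZMod 2,
        (Even (hammingNorm c) ∧ ∑ i, c i • a i = 0) ↔
        (Even (hammingNorm c) ∧ ∑ i, c i • b i = 0)) :=
  same_quad_code_iff_affine_general n ℓ a b
end

section
/- In a quad code of length 7 (subspace of Z_2^7, all codewords even weight, minimum nonzero weight ≥ 4), there is at most one codeword of weight 6. -/
/-!
Over `ZMod 2` two nonzero entries are equal, so two words can only differ where one of them
vanishes. Two words of weight 6 in length 7 each vanish at one place, hence are at distance at
most 2; their difference is a codeword of weight at most 2, so it is zero.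
-/

open Finset

lemma ite_ne_add_ite_ne_zero_add_ite_ne_zero_le_two (a b : ZMod 2) :
    (if a ≠ b then 1 else 0) + (if a ≠ 0 then 1 else 0) + (if b ≠ 0 then 1 else 0) ≤ 2 := by
  revert a b; decide

theorem hammingDist_add_hammingNorm_add_hammingNorm_le {ι : Type*} [Fintype ι]
    (c d : ι → ZMod 2) :
    hammingDist c d + hammingNorm c + hammingNorm d ≤ 2 * Fintype.card ι := by
  simp only [hammingDist, hammingNorm, card_filter, ← sum_add_distrib]
  calc _ ≤ ∑ _ : ι, 2 := sum_le_sum fun i _ ↦ ite_ne_add_ite_ne_zero_add_ite_ne_zero_le_two _ _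
    _ = 2 * Fintype.card ι := by rw [sum_const, card_univ, smul_eq_mul, mul_comm]

theorem length_seven_at_most_one_weight_six_general
    (C : Submodule (ZMod 2) (Fin 7 → ZMod 2))
    (hmin : ∀ c ∈ C, c ≠ 0 → 4 ≤ hammingNorm c) :
    ∀ c ∈ C, ∀ d ∈ C, hammingNorm c = 6 → hammingNorm d = 6 → c = d := by
  intro c hc d hd hc6 hd6
  have hdist : hammingDist c d ≤ 2 := by
    have := hammingDist_add_hammingNorm_add_hammingNorm_le c d
    rw [hc6, hd6, Fintype.card_fin] at this
    omega
  by_contra hne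
  have hweight := hmin (-c + d) (C.add_mem (C.neg_mem hc) hd)
    (neg_add_eq_zero.not.mpr hne)
  rw [← hammingDist_eq_hammingNorm] at hweight
  omega

/-- A quad code of length 7 contains at most one codeword of weight 6. -/
theorem length_seven_at_most_one_weight_six
    (C : Submodule (ZMod 2) (Fin 7 → ZMod 2))
    (heven : ∀ c ∈ C, Even (hammingNorm c))
    (hmin : ∀ c ∈ C, c ≠ 0 → 4 ≤ hammingNorm c) :
    ∀ c ∈ C, ∀ d ∈ C, hammingNorm c = 6 → hammingNorm d = 6 → c = d :=
  length_seven_at_most_one_weight_six_general C hmin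
end

section
/- A quad code of length 7 cannot contain exactly 6 codewords of weight 4 together with a codeword of weight 6; in particular, no quad code of length 7 has exactly 6 codewords of weight 4. -/
open Finset
open scoped symmDiff

namespace QuadCodeAux

abbrev V := Fin 7 → ZMod 2

noncomputable def supp (x : V) : Finset (Fin 7) := Finset.univ.filter (fun i => x i ≠ 0)

lemma mem_supp {x : V} {i : Fin 7} : i ∈ supp x ↔ x i ≠ 0 := by simp [supp]

lemma norm_eq (x : V) : hammingNorm x = (supp x).card := rfl

lemma supp_add (x y : V) : supp (x + y) = supp x ∆ supp y := by
  ext i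
  rw [Finset.mem_symmDiff, mem_supp, mem_supp, mem_supp, Pi.add_apply]
  have : ∀ a b : ZMod 2, a + b ≠ 0 ↔ (a ≠ 0 ∧ ¬ b ≠ 0) ∨ (b ≠ 0 ∧ ¬ a ≠ 0) := by decide
  exact this _ _

lemma card_symmDiff (s t : Finset (Fin 7)) :
    (s ∆ t).card + 2 * (s ∩ t).card = s.card + t.card := by
  have h1 := Finset.card_sdiff_add_card_inter s t
  have h2 := Finset.card_sdiff_add_card_inter t s
  rw [Finset.inter_comm] at h2
  have h3 : s ∆ t = (s \ t) ∪ (t \ s) := by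
    rw [symmDiff_def]; rfl
  have h4 : ((s \ t) ∪ (t \ s)).card = (s \ t).card + (t \ s).card :=
    Finset.card_union_of_disjoint (disjoint_sdiff_sdiff)
  rw [h3, h4]; omega

lemma add_eq_zero_iff (x y : V) : x + y = 0 ↔ x = y := by
  constructor
  · intro h
    funext i
    have := congrFun h i
    have h2 : ∀ a b : ZMod 2, a + b = 0 → a = b := by decide
    exact h2 _ _ this
  · rintro rfl
    funext i
    have h2 : ∀ a : ZMod 2, a + a = 0 := by decide
    exact h2 _

lemma norm_le (x : V) : hammingNorm x ≤ 7 := by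
  have := hammingNorm_le_card_fintype (x := x); simpa using this

/-- Core: can't have a weight-6 word and three distinct weight-4 words. -/
lemma key (C : Submodule (ZMod 2) V)
    (heven : ∀ c ∈ C, Even (hammingNorm c))
    (hmin : ∀ c ∈ C, c ≠ 0 → 4 ≤ hammingNorm c)
    (d : V) (hd : d ∈ C) (hdn : hammingNorm d = 6)
    (c₁ c₂ c₃ : V) (h12 : c₁ ≠ c₂) (h13 : c₁ ≠ c₃) (h23 : c₂ ≠ c₃)
    (hc₁ : c₁ ∈ C ∧ hammingNorm c₁ = 4) (hc₂ : c₂ ∈ C ∧ hammingNorm c₂ = 4)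
    (hc₃ : c₃ ∈ C ∧ hammingNorm c₃ = 4) : False := by
  -- find the coordinate j outside supp d
  obtain ⟨j, hj⟩ : ∃ j, j ∉ supp d := by
    by_contra h
    push_neg at h
    have huniv : supp d = Finset.univ := Finset.eq_univ_iff_forall.mpr h
    have h6 : (supp d).card = 6 := by rw [← norm_eq]; exact hdn
    rw [huniv] at h6
    simp at h6
  have hsd : supp d = Finset.univ.erase j := by
    apply Finset.eq_of_subset_of_card_le
    · intro k hk
      exact Finset.mem_erase.mpr ⟨fun h => hj (h ▸ hk), Finset.mem_univ k⟩
    · rw [Finset.card_erase_of_mem (Finset.mem_univ j)]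
      simp [← norm_eq, hdn]
  -- Step B: every weight-4 codeword has j in its support
  have stepB : ∀ c ∈ C, hammingNorm c = 4 → j ∈ supp c := by
    intro c hc hcn
    by_contra hcj
    have hsub : supp c ⊆ supp d := by
      rw [hsd]
      intro k hk
      exact Finset.mem_erase.mpr ⟨fun h => hcj (h ▸ hk), Finset.mem_univ k⟩
    have : hammingNorm (c + d) = 2 := by
      rw [norm_eq, supp_add, symmDiff_of_le hsub, Finset.card_sdiff_of_subset hsub,
        ← norm_eq, ← norm_eq, hdn, hcn]
    have hne : c + d ≠ 0 := by
      intro h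
      rw [h, hammingNorm_zero] at this
      omega
    have := hmin (c + d) (C.add_mem hc hd) hne
    omega
  -- Step C: supports of two distinct weight-4 codewords meet exactly in j
  have stepC : ∀ c c' : V, c ∈ C → c' ∈ C → hammingNorm c = 4 → hammingNorm c' = 4 →
      c ≠ c' → supp c ∩ supp c' = {j} := by
    intro c c' hc hc' hcn hc'n hne
    have hmem : c + c' ∈ C := C.add_mem hc hc'
    have hne0 : c + c' ≠ 0 := fun h => hne ((add_eq_zero_iff c c').mp h)
    have h4 := hmin _ hmem hne0
    have hcard := card_symmDiff (supp c) (supp c')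
    rw [← supp_add, ← norm_eq, ← norm_eq, ← norm_eq, hcn, hc'n] at hcard
    have hjmem : j ∈ supp c ∩ supp c' :=
      Finset.mem_inter.mpr ⟨stepB c hc hcn, stepB c' hc' hc'n⟩
    have h1le : 1 ≤ (supp c ∩ supp c').card := Finset.card_pos.mpr ⟨j, hjmem⟩
    -- if norm (c+c') = 4 then j ∈ supp (c+c'), contradiction
    have hn4 : hammingNorm (c + c') ≠ 4 := by
      intro h
      have := stepB _ hmem h
      rw [mem_supp, Pi.add_apply] at this
      have hcj : c j ≠ 0 := mem_supp.mp (Finset.mem_inter.mp hjmem).1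
      have hc'j : c' j ≠ 0 := mem_supp.mp (Finset.mem_inter.mp hjmem).2
      have : ∀ a b : ZMod 2, a ≠ 0 → b ≠ 0 → a + b = 0 := by decide
      exact (mem_supp.mp (stepB _ hmem h)) (this _ _ hcj hc'j)
    have hcard1 : (supp c ∩ supp c').card = 1 := by omega
    obtain ⟨a, ha⟩ := Finset.card_eq_one.mp hcard1
    rw [ha] at hjmem
    rw [ha, Finset.mem_singleton.mp hjmem]
  -- Step E: counting
  have hC := stepC c₁ c₂ hc₁.1 hc₂.1 hc₁.2 hc₂.2 h12
  have hC' := stepC c₁ c₃ hc₁.1 hc₃.1 hc₁.2 hc₃.2 h13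
  have hC'' := stepC c₂ c₃ hc₂.1 hc₃.1 hc₂.2 hc₃.2 h23
  set t₁ := (supp c₁).erase j with ht₁
  set t₂ := (supp c₂).erase j with ht₂
  set t₃ := (supp c₃).erase j with ht₃
  have hdisj : ∀ (a b : V), supp a ∩ supp b = {j} →
      Disjoint ((supp a).erase j) ((supp b).erase j) := by
    intro a b hab
    rw [Finset.disjoint_left]
    intro k hk hk'
    have : k ∈ supp a ∩ supp b :=
      Finset.mem_inter.mpr ⟨Finset.mem_of_mem_erase hk, Finset.mem_of_mem_erase hk'⟩
    rw [hab, Finset.mem_singleton] at this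
    exact (Finset.ne_of_mem_erase hk) this
  have hd12 := hdisj _ _ hC
  have hd13 := hdisj _ _ hC'
  have hd23 := hdisj _ _ hC''
  have hcardt : ∀ (a : V), a ∈ C → hammingNorm a = 4 → ((supp a).erase j).card = 3 := by
    intro a ha han
    rw [Finset.card_erase_of_mem (stepB a ha han), ← norm_eq, han]
  have hu : (t₁ ∪ t₂ ∪ t₃).card = 9 := by
    rw [Finset.card_union_of_disjoint (by
      rw [Finset.disjoint_union_left]; exact ⟨hd13, hd23⟩),
      Finset.card_union_of_disjoint hd12,
      hcardt c₁ hc₁.1 hc₁.2, hcardt c₂ hc₂.1 hc₂.2, hcardt c₃ hc₃.1 hc₃.2]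
  have hsub : t₁ ∪ t₂ ∪ t₃ ⊆ Finset.univ.erase j := by
    intro k hk
    simp only [Finset.mem_union] at hk
    rcases hk with (hk | hk) | hk <;>
      exact Finset.mem_erase.mpr ⟨Finset.ne_of_mem_erase hk, Finset.mem_univ k⟩
  have := Finset.card_le_card hsub
  rw [hu, Finset.card_erase_of_mem (Finset.mem_univ j)] at this
  simp at this

end QuadCodeAux

/-- A quad code of length 7 cannot have exactly 6 codewords of weight 4 together
with a weight-6 codeword; in particular it never has exactly 6 codewords of weight 4. -/
theorem length_seven_not_six_weight_four
    (C : Submodule (ZMod 2) (Fin 7 → ZMod 2))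
    (heven : ∀ c ∈ C, Even (hammingNorm c))
    (hmin : ∀ c ∈ C, c ≠ 0 → 4 ≤ hammingNorm c) :
    (¬ (Nat.card {c : Fin 7 → ZMod 2 // c ∈ C ∧ hammingNorm c = 4} = 6 ∧
        ∃ d ∈ C, hammingNorm d = 6)) ∧
    Nat.card {c : Fin 7 → ZMod 2 // c ∈ C ∧ hammingNorm c = 4} ≠ 6 := by
  classical
  have main : ¬ (Nat.card {c : Fin 7 → ZMod 2 // c ∈ C ∧ hammingNorm c = 4} = 6 ∧
      ∃ d ∈ C, hammingNorm d = 6) := by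
    rintro ⟨h6, d, hd, hdn⟩
    -- turn the card hypothesis into a Finset of card 6 and pick 3 distinct elements
    have hfin : Nat.card {c : Fin 7 → ZMod 2 // c ∈ C ∧ hammingNorm c = 4}
        = (Finset.univ.filter (fun c : Fin 7 → ZMod 2 => c ∈ C ∧ hammingNorm c = 4)).card := by
      rw [Nat.card_eq_fintype_card, Fintype.card_subtype]
    rw [hfin] at h6
    obtain ⟨t, hts, ht3⟩ := Finset.exists_subset_card_eq (s := Finset.univ.filter
      (fun c : Fin 7 → ZMod 2 => c ∈ C ∧ hammingNorm c = 4)) (n := 3) (by omega)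
    obtain ⟨c₁, c₂, c₃, h12, h13, h23, rfl⟩ := Finset.card_eq_three.mp ht3
    have m1 := hts (by simp : c₁ ∈ ({c₁, c₂, c₃} : Finset _))
    have m2 := hts (by simp : c₂ ∈ ({c₁, c₂, c₃} : Finset _))
    have m3 := hts (by simp : c₃ ∈ ({c₁, c₂, c₃} : Finset _))
    simp only [Finset.mem_filter, Finset.mem_univ, true_and] at m1 m2 m3
    exact QuadCodeAux.key C heven hmin d hd hdn c₁ c₂ c₃ h12 h13 h23 m1 m2 m3
  refine ⟨main, ?_⟩
  intro h6
  -- no weight-6 codeword can exist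
  have hno6 : ¬ ∃ d ∈ C, hammingNorm d = 6 := fun h => main ⟨h6, h⟩
  push_neg at hno6
  -- so C = {0} ∪ weight-4 words, card 7, contradicting Lagrange
  have hCset : (C : Set (Fin 7 → ZMod 2)) =
      insert 0 {c | c ∈ C ∧ hammingNorm c = 4} := by
    ext x
    simp only [SetLike.mem_coe, Set.mem_insert_iff, Set.mem_setOf_eq]
    constructor
    · intro hx
      by_cases h0 : x = 0
      · exact Or.inl h0
      · right
        refine ⟨hx, ?_⟩
        have h1 := heven x hx
        have h2 := hmin x hx h0
        have h3 := QuadCodeAux.norm_le x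
        have h4 := hno6 x hx
        obtain ⟨m, hm⟩ := h1
        omega
    · rintro (rfl | ⟨hx, _⟩)
      · exact C.zero_mem
      · exact hx
  have h0nm : (0 : Fin 7 → ZMod 2) ∉ {c | c ∈ C ∧ hammingNorm c = 4} := by
    simp [hammingNorm_zero]
  have hncard : Nat.card C = 7 := by
    have e1 : Nat.card C = (C : Set (Fin 7 → ZMod 2)).ncard := by
      rw [← Nat.card_coe_set_eq]
      rfl
    rw [e1, hCset, Set.ncard_insert_of_notMem h0nm (Set.toFinite _)]
    have e2 : {c | c ∈ C ∧ hammingNorm c = 4}.ncard = 6 := by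
      rw [← Nat.card_coe_set_eq]
      exact h6
    rw [e2]
  have hdvd : Nat.card C ∣ Nat.card (Fin 7 → ZMod 2) :=
    AddSubgroup.card_addSubgroup_dvd_card C.toAddSubgroup
  rw [hncard, Nat.card_eq_fintype_card] at hdvd
  have : Fintype.card (Fin 7 → ZMod 2) = 128 := by simp
  rw [this] at hdvd
  omega
end

section
/- If ℓ distinct cards in Z_2^n form a no-quads set (no four of them sum to zero), then 2^n ≥ (ℓ² − ℓ + 2)/2. -/
open Finset

/-- If ℓ distinct cards in Z₂ⁿ form a no-quads set, then 2ⁿ ≥ (ℓ² - ℓ + 2)/2. -/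
theorem no_quads_set_deck_lower_bound (n ℓ : ℕ)
    (a : Fin ℓ → (Fin n → ZMod 2)) (ha : Function.Injective a)
    (hnq : ∀ s : Finset (Fin ℓ), s.card = 4 → ∑ i ∈ s, a i ≠ 0) :
    ℓ ^ 2 - ℓ + 2 ≤ 2 * 2 ^ n := by
  classical
  -- every vector added to itself is 0
  have hself : ∀ x : Fin n → ZMod 2, x + x = 0 := fun x =>
    funext fun i => CharTwo.add_self_eq_zero (x i)
  have hcancel : ∀ x y : Fin n → ZMod 2, x + y = 0 → x = y := by
    intro x y h
    have : x + (y + y) = 0 + y := by rw [← add_assoc, h]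
    simpa [hself y] using this
  -- pairwise sums are distinct and nonzero
  have key : ∀ i j k l : Fin ℓ, i ≠ j → k ≠ l → a i + a j = a k + a l →
      ({i, j} : Finset (Fin ℓ)) = {k, l} := by
    intro i j k l hij hkl h
    by_cases hik : i = k
    · subst hik
      have : a j = a l := add_left_cancel h
      rw [ha this]
    by_cases hil : i = l
    · subst hil
      have : a j = a k := add_left_cancel (by rw [h, add_comm])
      rw [ha this]
      exact Finset.pair_comm _ _
    by_cases hjk : j = k
    · subst hjk
      have : a i = a l := by
        have := h
        rw [add_comm (a j) (a l)] at this
        exact add_right_cancel this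
      rw [ha this]
      exact Finset.pair_comm _ _
    by_cases hjl : j = l
    · subst hjl
      have : a i = a k := add_right_cancel h
      rw [ha this]
    · -- four distinct indices: contradiction with hnq
      exfalso
      have hcard : ({i, j, k, l} : Finset (Fin ℓ)).card = 4 := by
        rw [Finset.card_insert_of_notMem (by simp [hij, hik, hil]),
          Finset.card_insert_of_notMem (by simp [hjk, hjl]),
          Finset.card_insert_of_notMem (by simp [hkl]), Finset.card_singleton]
      apply hnq _ hcard
      have hsum : ∑ x ∈ ({i, j, k, l} : Finset (Fin ℓ)), a x = a i + a j + (a k + a l) := by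
        rw [Finset.sum_insert (by simp [hij, hik, hil]),
          Finset.sum_insert (by simp [hjk, hjl]),
          Finset.sum_insert (by simp [hkl]), Finset.sum_singleton]
        ring
      rw [hsum, h, hself]
  -- the map from 2-subsets
  set f : Finset (Fin ℓ) → (Fin n → ZMod 2) := fun s => ∑ i ∈ s, a i with hf
  have hmaps : ∀ s ∈ Finset.powersetCard 2 (univ : Finset (Fin ℓ)),
      f s ∈ (univ : Finset (Fin n → ZMod 2)) \ {0} := by
    intro s hs
    rw [Finset.mem_powersetCard] at hs
    obtain ⟨i, j, hij, rfl⟩ := Finset.card_eq_two.mp hs.2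
    simp only [Finset.mem_sdiff, Finset.mem_univ, Finset.mem_singleton, true_and]
    intro h0
    have : f {i, j} = a i + a j := by
      rw [hf]
      simp [Finset.sum_pair hij]
    rw [this] at h0
    exact hij (ha (hcancel _ _ h0))
  have hinj : ∀ s ∈ Finset.powersetCard 2 (univ : Finset (Fin ℓ)),
      ∀ t ∈ Finset.powersetCard 2 (univ : Finset (Fin ℓ)), f s = f t → s = t := by
    intro s hs t ht hst
    rw [Finset.mem_powersetCard] at hs ht
    obtain ⟨i, j, hij, rfl⟩ := Finset.card_eq_two.mp hs.2
    obtain ⟨k, l, hkl, rfl⟩ := Finset.card_eq_two.mp ht.2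
    apply key i j k l hij hkl
    have h1 : f {i, j} = a i + a j := by rw [hf]; simp [Finset.sum_pair hij]
    have h2 : f {k, l} = a k + a l := by rw [hf]; simp [Finset.sum_pair hkl]
    rw [← h1, ← h2, hst]
  have hcount := Finset.card_le_card_of_injOn f hmaps hinj
  rw [Finset.card_powersetCard, Finset.card_univ, Fintype.card_fin] at hcount
  have hsd : ((univ : Finset (Fin n → ZMod 2)) \ {0}).card = 2 ^ n - 1 := by
    rw [Finset.card_sdiff_of_subset (by simp), Finset.card_univ, Finset.card_singleton]
    simp [Fintype.card_fun]
  rw [hsd] at hcount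
  have hpos : 1 ≤ 2 ^ n := Nat.one_le_two_pow
  have h2c : 2 * Nat.choose ℓ 2 = ℓ * (ℓ - 1) := by
    rw [Nat.choose_two_right]
    have hev : Even (ℓ * (ℓ - 1)) := by
      rcases ℓ with _ | m
      · simp
      · rw [Nat.succ_sub_one, Nat.mul_comm]
        exact Nat.even_mul_succ_self m
    obtain ⟨r, hr⟩ := hev
    omega
  have hsq : ℓ ^ 2 = ℓ * ℓ := sq ℓ
  have : ℓ * (ℓ - 1) = ℓ * ℓ - ℓ := by
    rcases ℓ with _ | m
    · simp
    · rw [Nat.succ_sub_one, Nat.mul_succ, Nat.mul_comm]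
      omega
  omega
end

section
/- If binomial(ℓ, 4) + 3 < 2^n, then there exists a set of ℓ pairwise distinct vectors in Z_2^n containing no four distinct vectors summing to zero (a no-quads set of size ℓ). -/
open Finset

lemma le_choose_four_add_three : ∀ m : ℕ, m ≤ Nat.choose m 4 + 3 := by
  intro m
  induction m with
  | zero => simp
  | succ k ih =>
    rcases le_or_gt k 2 with hk | hk
    · interval_cases k <;> simp [Nat.choose]
    · have h1 : 1 ≤ Nat.choose k 3 := Nat.choose_pos (by omega)
      have h2 : Nat.choose (k + 1) 4 = Nat.choose k 3 + Nat.choose k 4 :=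
        Nat.choose_succ_succ k 3
      omega

/-- If C(ℓ,4) + 3 < 2ⁿ, then there is a no-quads set of ℓ cards in Z₂ⁿ. -/
theorem no_quads_set_exists (n ℓ : ℕ) (h : Nat.choose ℓ 4 + 3 < 2 ^ n) :
    ∃ S : Finset (Fin n → ZMod 2), S.card = ℓ ∧
      ∀ t ⊆ S, t.card = 4 → ∑ x ∈ t, x ≠ 0 := by
  induction ℓ with
  | zero =>
    refine ⟨∅, rfl, ?_⟩
    intro t ht ht4
    have : t = ∅ := Finset.subset_empty.mp ht
    simp [this] at ht4
  | succ m ih =>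
    have hm : Nat.choose m 4 + 3 < 2 ^ n := by
      have := Nat.choose_le_choose 4 (Nat.le_succ m)
      simp only [Nat.succ_eq_add_one] at this
      omega
    obtain ⟨S, hScard, hSquad⟩ := ih hm
    -- the bad set
    set B : Finset (Fin n → ZMod 2) :=
      S ∪ (S.powersetCard 3).image (fun t => ∑ x ∈ t, x) with hB
    have hBcard : B.card < 2 ^ n := by
      have h1 : B.card ≤ S.card + ((S.powersetCard 3).image (fun t => ∑ x ∈ t, x)).card :=
        Finset.card_union_le _ _
      have h2 : ((S.powersetCard 3).image (fun t => ∑ x ∈ t, x)).card ≤ Nat.choose m 3 := by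
        refine le_trans (Finset.card_image_le) ?_
        rw [Finset.card_powersetCard, hScard]
      have h3 : Nat.choose (m + 1) 4 = Nat.choose m 3 + Nat.choose m 4 :=
        Nat.choose_succ_succ m 3
      have h4 := le_choose_four_add_three m
      omega
    have hcardU : Fintype.card (Fin n → ZMod 2) = 2 ^ n := by simp
    obtain ⟨x, hx⟩ : ∃ x, x ∉ B := by
      by_contra hcon
      push_neg at hcon
      have : B = Finset.univ := Finset.eq_univ_iff_forall.mpr hcon
      rw [this, Finset.card_univ, hcardU] at hBcard
      exact lt_irrefl _ hBcard
    have hxS : x ∉ S := fun hxs => hx (Finset.mem_union_left _ hxs)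
    refine ⟨insert x S, by rw [Finset.card_insert_of_notMem hxS, hScard], ?_⟩
    intro t ht ht4
    by_cases hxt : x ∈ t
    · intro h0
      set t' := t.erase x with ht'
      have ht'S : t' ⊆ S := by
        intro y hy
        have hy1 := Finset.mem_of_mem_erase hy
        have hy2 := Finset.ne_of_mem_erase hy
        rcases Finset.mem_insert.mp (ht hy1) with h | h
        · exact absurd h hy2
        · exact h
      have ht'card : t'.card = 3 := by
        rw [ht', Finset.card_erase_of_mem hxt, ht4]
      have hsum : x + ∑ y ∈ t', y = ∑ y ∈ t, y :=
        Finset.add_sum_erase t (fun y => y) hxt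
      have hx2 : x = ∑ y ∈ t', y := by
        have : x = -∑ y ∈ t', y := by
          apply eq_neg_of_add_eq_zero_left
          rw [hsum, h0]
        have hneg : -(∑ y ∈ t', y) = ∑ y ∈ t', y := by
          funext i
          simp [CharTwo.neg_eq]
        rwa [hneg] at this
      apply hx
      apply Finset.mem_union_right
      apply Finset.mem_image.mpr
      exact ⟨t', Finset.mem_powersetCard.mpr ⟨ht'S, ht'card⟩, hx2.symm⟩
    · have htS : t ⊆ S := by
        intro y hy
        rcases Finset.mem_insert.mp (ht hy) with h | h
        · exact absurd (h ▸ hy) hxt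
        · exact h
      exact hSquad t htS ht4
end
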